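/- arXiv:2404.11250 — 2 statements merged into one kernel-verified Lean document; each statement's English description precedes it below -/
import Mathlib

section
/- Under the Kantorovich hypotheses, a Newton sequence for F starting at u* exists; that is, there is a sequence (u^(k)) in X with u^(0) = u* such that for every k the derivative F'_{u^(k)} is a continuous linear bijection from X onto Y, u^(k+1) = u^(k) − (F'_{u^(k)})⁻¹ F(u^(k)), and every iterate u^(k) lies in the closed ball of radius r⁻ around u*. -/
/-!
The Newton iterates `u k` are majorized by the scalar Newton iterates `t k` for
`p t = β K / 2 * t ^ 2 - t + α` started at `0`, which increase to the smaller root `r⁻` of `p`.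
By induction, `‖u k - u*‖ ≤ t k` and `‖u (k+1) - u k‖ ≤ t (k+1) - t k`: the Banach perturbation
lemma inverts `F' (u k)` with `‖F' (u k)⁻¹‖ ≤ β / (1 - β K t k) = -β / p' (t k)`, and the Taylor
bound `‖F (u (k+1))‖ ≤ K / 2 * ‖u (k+1) - u k‖ ^ 2` is matched by
`p (t (k+1)) = β K / 2 * (t (k+1) - t k) ^ 2`.
-/

open Metric

theorem ContinuousLinearEquiv.exists_eq_of_norm_sub_le
    {X Y : Type*} [NormedAddCommGroup X] [NormedSpace ℝ X] [CompleteSpace X]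
    [NormedAddCommGroup Y] [NormedSpace ℝ Y]
    (Γ : X ≃L[ℝ] Y) (A : X →L[ℝ] Y) {q : ℝ}
    (hq : ‖(Γ.symm : Y →L[ℝ] X)‖ * ‖(Γ : X →L[ℝ] Y) - A‖ ≤ q) (hq1 : q < 1) :
    ∃ e : X ≃L[ℝ] Y, (e : X →L[ℝ] Y) = A ∧
      ‖(e.symm : Y →L[ℝ] X)‖ ≤ ‖(Γ.symm : Y →L[ℝ] X)‖ / (1 - q) := by
  set m := (Γ.symm : Y →L[ℝ] X).comp ((Γ : X →L[ℝ] Y) - A)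
  have hm : ‖m‖ ≤ q := (ContinuousLinearMap.opNorm_comp_le _ _).trans hq
  have hm1 : ‖m‖ < 1 := hm.trans_lt hq1
  -- `A = Γ ∘ (1 - m)`, and `1 - m` is inverted by the Neumann series `∑ m ^ n`
  refine ⟨(ContinuousLinearEquiv.ofUnit (Units.oneSub m hm1)).trans Γ, ?_, ?_⟩
  · ext x
    change Γ (x - Γ.symm (Γ x - A x)) = A x
    simp
  · have hgeom : ‖∑' n : ℕ, m ^ n‖ ≤ (1 - ‖m‖)⁻¹ := by
      have hone : ‖(1 : X →L[ℝ] X)‖ ≤ 1 := ContinuousLinearMap.norm_id_le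
      linarith [tsum_geometric_le_of_norm_lt_one m hm1]
    calc ‖(∑' n : ℕ, m ^ n).comp (Γ.symm : Y →L[ℝ] X)‖
        ≤ ‖∑' n : ℕ, m ^ n‖ * ‖(Γ.symm : Y →L[ℝ] X)‖ := ContinuousLinearMap.opNorm_comp_le _ _
      _ ≤ (1 - q)⁻¹ * ‖(Γ.symm : Y →L[ℝ] X)‖ := by
        gcongr
        exact hgeom.trans (by gcongr)
      _ = _ := inv_mul_eq_div _ _

theorem Convex.norm_image_sub_sub_fderiv_le {E F : Type*} [NormedAddCommGroup E]
    [NormedSpace ℝ E] [NormedAddCommGroup F] [NormedSpace ℝ F] {f : E → F} {f' : E → E →L[ℝ] F}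
    {D : Set E} {K : ℝ}
    (hD : Convex ℝ D) (hf : ∀ x ∈ D, HasFDerivAt f (f' x) x)
    (hLip : ∀ x ∈ D, ∀ y ∈ D, ‖f' x - f' y‖ ≤ K * ‖x - y‖) {x y : E} (hx : x ∈ D) (hy : y ∈ D) :
    ‖f y - f x - f' x (y - x)‖ ≤ K / 2 * ‖y - x‖ ^ 2 := by
  set w := y - x
  have hseg : ∀ s ∈ Set.Icc (0 : ℝ) 1, x + s • w ∈ D := fun s hs => hD.add_smul_sub_mem hx hy hs
  have hderiv : ∀ s ∈ Set.Icc (0 : ℝ) 1,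
      HasDerivAt (fun s : ℝ => f (x + s • w) - f x - s • f' x w) (f' (x + s • w) w - f' x w) s := by
    intro s hs
    have hline : HasDerivAt (fun s : ℝ => x + s • w) w s := by
      simpa using ((hasDerivAt_id s).smul_const w).const_add x
    have hlin : HasDerivAt (fun s : ℝ => s • f' x w) (f' x w) s := by
      simpa using (hasDerivAt_id' s).smul_const (f' x w)
    exact (((hf _ (hseg s hs)).comp_hasDerivAt s hline).sub_const (f x)).sub hlin
  have hbound : ∀ s ∈ Set.Ico (0 : ℝ) 1, ‖f' (x + s • w) w - f' x w‖ ≤ K * ‖w‖ ^ 2 * s := by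
    intro s hs
    calc ‖f' (x + s • w) w - f' x w‖ = ‖(f' (x + s • w) - f' x) w‖ := rfl
      _ ≤ ‖f' (x + s • w) - f' x‖ * ‖w‖ := ContinuousLinearMap.le_opNorm _ _
      _ ≤ K * ‖x + s • w - x‖ * ‖w‖ := by
        gcongr
        exact hLip _ (hseg s (Set.Ico_subset_Icc_self hs)) _ hx
      _ = K * ‖w‖ ^ 2 * s := by
        rw [add_sub_cancel_left, norm_smul, Real.norm_of_nonneg hs.1]
        ring
  have hB : ∀ s : ℝ, HasDerivAt (fun s => K / 2 * ‖w‖ ^ 2 * s ^ 2) (K * ‖w‖ ^ 2 * s) s := by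
    intro s
    have := (hasDerivAt_pow 2 s).const_mul (K / 2 * ‖w‖ ^ 2)
    rwa [Nat.cast_ofNat, show K / 2 * ‖w‖ ^ 2 * (2 * s ^ (2 - 1)) = K * ‖w‖ ^ 2 * s by ring] at this
  have := image_norm_le_of_norm_deriv_right_le_deriv_boundary (a := 0) (b := 1)
    (fun s hs => (hderiv s hs).continuousAt.continuousWithinAt)
    (fun s hs => (hderiv s (Set.Ico_subset_Icc_self hs)).hasDerivWithinAt)
    (B := fun s => K / 2 * ‖w‖ ^ 2 * s ^ 2) (by simp) hB hbound (Set.right_mem_Icc.2 zero_le_one)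
  simpa [w] using this

/-- Newton's iteration for `t ↦ a / 2 * t ^ 2 - t + α`, started at `0`. -/
noncomputable def kantorovichSeq (a α : ℝ) : ℕ → ℝ
  | 0 => 0
  | k + 1 => kantorovichSeq a α k +
      (a / 2 * kantorovichSeq a α k ^ 2 - kantorovichSeq a α k + α) / (1 - a * kantorovichSeq a α k)

theorem kantorovichSeq_sub_succ {a α : ℝ} {k : ℕ} (hk : 1 - a * kantorovichSeq a α k ≠ 0) :
    kantorovichSeq a α (k + 2) - kantorovichSeq a α (k + 1) =
      a / 2 * (kantorovichSeq a α (k + 1) - kantorovichSeq a α k) ^ 2 /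
        (1 - a * kantorovichSeq a α (k + 1)) := by
  have hstep : (1 - a * kantorovichSeq a α k) * (kantorovichSeq a α (k + 1) - kantorovichSeq a α k)
      = a / 2 * kantorovichSeq a α k ^ 2 - kantorovichSeq a α k + α := by
    rw [kantorovichSeq, add_sub_cancel_left, mul_div_cancel₀ _ hk]
  rw [kantorovichSeq.eq_2 a α (k + 1), add_sub_cancel_left]
  congr 1
  linear_combination -hstep

theorem kantorovichSeq_le_and_lt {a α r : ℝ} (ha : 0 ≤ a) (hα : 2 * a * α ≤ 1) (hr : 0 ≤ r)
    (hroot : a / 2 * r ^ 2 - r + α = 0) (k : ℕ) :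
    kantorovichSeq a α k ≤ r ∧ a * kantorovichSeq a α k < 1 := by
  induction k with
  | zero => simp [kantorovichSeq, hr]
  | succ k ih =>
    rw [kantorovichSeq]
    set t := kantorovichSeq a α k
    set Δ := (a / 2 * t ^ 2 - t + α) / (1 - a * t)
    have hd : 0 < 1 - a * t := by linarith [ih.2]
    have hΔ : (1 - a * t) * Δ = a / 2 * t ^ 2 - t + α := mul_div_cancel₀ _ hd.ne'
    have hgap : (1 - a * t) * (r - (t + Δ)) = a / 2 * (r - t) ^ 2 := by
      linear_combination -hroot - hΔ
    have hcoeff : (2 * (1 - a * t)) * (1 - a * (t + Δ)) = (1 - a * t) ^ 2 + (1 - 2 * a * α) := by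
      linear_combination (-2 * a) * hΔ
    constructor
    · have := (mul_nonneg_iff_of_pos_left hd).1 (by rw [hgap]; positivity)
      linarith
    · have := (mul_pos_iff_of_pos_left (by positivity : (0 : ℝ) < 2 * (1 - a * t))).1
        (by rw [hcoeff]; nlinarith)
      linarith

theorem kantorovich_small_root {a α : ℝ} (h : 0 < a ∨ α = 0) (hα : 0 ≤ α)
    (hsmall : 2 * a * α ≤ 1) :
    0 ≤ (1 - √(1 - 2 * a * α)) / a ∧
      a / 2 * ((1 - √(1 - 2 * a * α)) / a) ^ 2 - (1 - √(1 - 2 * a * α)) / a + α = 0 := by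
  rcases h with ha | rfl
  · set s := √(1 - 2 * a * α)
    have hs : s ^ 2 = 1 - 2 * a * α := Real.sq_sqrt (by linarith)
    have hs1 : s ≤ 1 := Real.sqrt_le_one.2 (by nlinarith)
    refine ⟨div_nonneg (by linarith) ha.le, ?_⟩
    field_simp
    linear_combination hs
  · simp

section Kantorovich

variable {X Y : Type*} [NormedAddCommGroup X] [NormedSpace ℝ X] [NormedAddCommGroup Y]
  [NormedSpace ℝ Y] {F : X → Y} {F' : X → X →L[ℝ] Y} {u₀ : X}

/-- `ContinuousLinearMap.inverse` is `0` at a non-invertible derivative; under the Kantorovich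
hypotheses the iterates never meet one. -/
noncomputable def newtonSeq (F : X → Y) (F' : X → X →L[ℝ] Y) (u₀ : X) : ℕ → X
  | 0 => u₀
  | k + 1 => newtonSeq F F' u₀ k - (F' (newtonSeq F F' u₀ k)).inverse (F (newtonSeq F F' u₀ k))

theorem newtonSeq_succ_of_eq {k : ℕ} (e : X ≃L[ℝ] Y)
    (he : (e : X →L[ℝ] Y) = F' (newtonSeq F F' u₀ k)) :
    newtonSeq F F' u₀ (k + 1) = newtonSeq F F' u₀ k - e.symm (F (newtonSeq F F' u₀ k)) := by
  rw [newtonSeq, ← he, ContinuousLinearMap.inverse_equiv]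
  rfl

variable {Γ : X ≃L[ℝ] Y} {K r a : ℝ}

theorem exists_equiv_eq_fderiv_of_norm_sub_le [CompleteSpace X] (hΓ : (Γ : X →L[ℝ] Y) = F' u₀)
    (hK : 0 ≤ K)
    (hLip : ∀ u₁ ∈ closedBall u₀ r, ∀ u₂ ∈ closedBall u₀ r, ‖F' u₁ - F' u₂‖ ≤ K * ‖u₁ - u₂‖)
    (ha : ‖(Γ.symm : Y →L[ℝ] X)‖ * K ≤ a) {v : X} {t : ℝ} (hv : ‖v - u₀‖ ≤ t) (htr : t ≤ r)
    (hat : a * t < 1) :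
    ∃ e : X ≃L[ℝ] Y, (e : X →L[ℝ] Y) = F' v ∧
      ‖(e.symm : Y →L[ℝ] X)‖ ≤ ‖(Γ.symm : Y →L[ℝ] X)‖ / (1 - a * t) := by
  have hu₀ : u₀ ∈ closedBall u₀ r := mem_closedBall_self ((norm_nonneg _).trans (hv.trans htr))
  have hvmem : v ∈ closedBall u₀ r := mem_closedBall_iff_norm.2 (hv.trans htr)
  refine Γ.exists_eq_of_norm_sub_le (F' v) ?_ hat
  calc ‖(Γ.symm : Y →L[ℝ] X)‖ * ‖(Γ : X →L[ℝ] Y) - F' v‖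
      ≤ ‖(Γ.symm : Y →L[ℝ] X)‖ * (K * ‖u₀ - v‖) := by
        rw [hΓ]; gcongr; exact hLip _ hu₀ _ hvmem
    _ = ‖(Γ.symm : Y →L[ℝ] X)‖ * K * ‖v - u₀‖ := by rw [norm_sub_rev]; ring
    _ ≤ a * t := mul_le_mul ha hv (norm_nonneg _) ((by positivity : (0 : ℝ) ≤ _).trans ha)

theorem newtonSeq_kantorovich_bounds [CompleteSpace X] (hΓ : (Γ : X →L[ℝ] Y) = F' u₀)
    (hK : 0 ≤ K)
    (hdiff : ∀ u ∈ closedBall u₀ r, HasFDerivAt F (F' u) u)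
    (hLip : ∀ u₁ ∈ closedBall u₀ r, ∀ u₂ ∈ closedBall u₀ r, ‖F' u₁ - F' u₂‖ ≤ K * ‖u₁ - u₂‖)
    {α : ℝ} (ha : ‖(Γ.symm : Y →L[ℝ] X)‖ * K ≤ a) (hα : ‖Γ.symm (F u₀)‖ ≤ α)
    (ht : ∀ k, kantorovichSeq a α k ≤ r ∧ a * kantorovichSeq a α k < 1) (k : ℕ) :
    ‖newtonSeq F F' u₀ k - u₀‖ ≤ kantorovichSeq a α k ∧
      ‖newtonSeq F F' u₀ (k + 1) - newtonSeq F F' u₀ k‖ ≤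
        kantorovichSeq a α (k + 1) - kantorovichSeq a α k := by
  set u := newtonSeq F F' u₀
  set t := kantorovichSeq a α
  induction k with
  | zero =>
    have hu₁ : u 1 = u₀ - Γ.symm (F u₀) := newtonSeq_succ_of_eq Γ hΓ
    simpa [u, t, hu₁, newtonSeq, kantorovichSeq] using hα
  | succ k ih =>
    obtain ⟨hdist, hstep⟩ := ih
    have hdist' : ‖u (k + 1) - u₀‖ ≤ t (k + 1) := by
      calc ‖u (k + 1) - u₀‖ ≤ ‖u (k + 1) - u k‖ + ‖u k - u₀‖ :=
            norm_sub_le_norm_sub_add_norm_sub _ _ _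
        _ ≤ t (k + 1) := by linarith
    have hmem : u k ∈ closedBall u₀ r := mem_closedBall_iff_norm.2 (hdist.trans (ht k).1)
    have hmem' : u (k + 1) ∈ closedBall u₀ r :=
      mem_closedBall_iff_norm.2 (hdist'.trans (ht (k + 1)).1)
    obtain ⟨e, he, -⟩ :=
      exists_equiv_eq_fderiv_of_norm_sub_le hΓ hK hLip ha hdist (ht k).1 (ht k).2
    obtain ⟨e', he', he'_le⟩ :=
      exists_equiv_eq_fderiv_of_norm_sub_le hΓ hK hLip ha hdist' (ht (k + 1)).1 (ht (k + 1)).2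
    have hu : u (k + 1) = u k - e.symm (F (u k)) := newtonSeq_succ_of_eq e he
    have hu' : u (k + 2) = u (k + 1) - e'.symm (F (u (k + 1))) := newtonSeq_succ_of_eq e' he'
    -- the Newton step kills the linear part of `F` at `u k`, leaving the Taylor remainder
    have hres : ‖F (u (k + 1))‖ ≤ K / 2 * (t (k + 1) - t k) ^ 2 := by
      have hlin : F' (u k) (u (k + 1) - u k) = -F (u k) := by
        rw [hu, sub_sub_cancel_left, map_neg, ← he]
        simp
      have := (convex_closedBall u₀ r).norm_image_sub_sub_fderiv_le hdiff hLip hmem hmem'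
      rw [hlin, sub_neg_eq_add, sub_add_cancel] at this
      exact this.trans (by gcongr)
    refine ⟨hdist', ?_⟩
    rw [hu', sub_sub_cancel_left, norm_neg,
      kantorovichSeq_sub_succ (sub_pos.2 (ht k).2).ne']
    have hd : 0 < 1 - a * t (k + 1) := sub_pos.2 (ht (k + 1)).2
    calc ‖e'.symm (F (u (k + 1)))‖ ≤ ‖(e'.symm : Y →L[ℝ] X)‖ * ‖F (u (k + 1))‖ :=
          (e'.symm : Y →L[ℝ] X).le_opNorm _
      _ ≤ ‖(Γ.symm : Y →L[ℝ] X)‖ / (1 - a * t (k + 1)) * (K / 2 * (t (k + 1) - t k) ^ 2) :=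
          mul_le_mul he'_le hres (norm_nonneg _) (by positivity)
      _ = ‖(Γ.symm : Y →L[ℝ] X)‖ * K / 2 * (t (k + 1) - t k) ^ 2 / (1 - a * t (k + 1)) := by ring
      _ ≤ a / 2 * (t (k + 1) - t k) ^ 2 / (1 - a * t (k + 1)) := by gcongr

end Kantorovich

theorem newton_kantorovich_sequence_exists_general
    {X Y : Type*} [NormedAddCommGroup X] [NormedSpace ℝ X] [CompleteSpace X]
    [NormedAddCommGroup Y] [NormedSpace ℝ Y]
    (F : X → Y) (F' : X → X →L[ℝ] Y)
    (Dstar : Set X)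
    (hdiff : ∀ u ∈ Dstar, HasFDerivAt F (F' u) u)
    (K : ℝ) (hK : 0 < K)
    (hLip : ∀ u₁ ∈ Dstar, ∀ u₂ ∈ Dstar, ‖F' u₁ - F' u₂‖ ≤ K * ‖u₁ - u₂‖)
    (ustar : X)
    (Γ : X ≃L[ℝ] Y) (hΓ : (Γ : X →L[ℝ] Y) = F' ustar)
    (β α rminus : ℝ)
    (hβ : β = ‖(Γ.symm : Y →L[ℝ] X)‖)
    (hα : α = ‖Γ.symm (F ustar)‖)
    (hsmall : β * K * α ≤ 1 / 2)
    (hrminus : rminus = (1 - Real.sqrt (1 - 2 * β * K * α)) / (β * K))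
    (hball : closedBall ustar rminus ⊆ Dstar) :
    ∃ u : ℕ → X, u 0 = ustar ∧
      (∀ k, ∃ e : X ≃L[ℝ] Y, (e : X →L[ℝ] Y) = F' (u k) ∧
        u (k + 1) = u k - e.symm (F (u k))) ∧
      (∀ k, u k ∈ closedBall ustar rminus) := by
  subst hβ hα hrminus
  set β := ‖(Γ.symm : Y →L[ℝ] X)‖
  set α := ‖Γ.symm (F ustar)‖
  have hα0 : 0 ≤ α := norm_nonneg _
  have hdegenerate : 0 < β * K ∨ α = 0 := by
    refine hα0.lt_or_eq.imp (fun hpos => mul_pos ?_ hK) Eq.symm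
    have hαβ : α ≤ β * ‖F ustar‖ := (Γ.symm : Y →L[ℝ] X).le_opNorm _
    exact pos_of_mul_pos_left (hpos.trans_le hαβ) (norm_nonneg _)
  rw [mul_assoc 2 β K] at hball ⊢
  obtain ⟨hr0, hroot⟩ := kantorovich_small_root hdegenerate hα0 (by linarith)
  have ht := kantorovichSeq_le_and_lt (by positivity) (by linarith) hr0 hroot
  have hdiff' := fun u hu => hdiff u (hball hu)
  have hLip' := fun u₁ hu₁ u₂ hu₂ => hLip u₁ (hball hu₁) u₂ (hball hu₂)
  have hbounds := newtonSeq_kantorovich_bounds hΓ hK.le hdiff' hLip' le_rfl le_rfl ht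
  refine ⟨newtonSeq F F' ustar, rfl, fun k => ?_, fun k => ?_⟩
  · obtain ⟨e, he, -⟩ :=
      exists_equiv_eq_fderiv_of_norm_sub_le hΓ hK.le hLip' le_rfl (hbounds k).1 (ht k).1 (ht k).2
    exact ⟨e, he, newtonSeq_succ_of_eq e he⟩
  · exact mem_closedBall_iff_norm.2 ((hbounds k).1.trans (ht k).1)

/-- Newton–Kantorovich: existence of a Newton sequence for `F` starting at `ustar`,
whose iterates all lie in the closed ball of radius `r⁻` around `ustar`. -/
theorem newton_kantorovich_sequence_exists
    {X Y : Type*} [NormedAddCommGroup X] [NormedSpace ℝ X] [CompleteSpace X]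
    [NormedAddCommGroup Y] [NormedSpace ℝ Y] [CompleteSpace Y]
    (F : X → Y) (F' : X → X →L[ℝ] Y)
    (Dstar : Set X) (hDopen : IsOpen Dstar) (hDconv : Convex ℝ Dstar)
    (hdiff : ∀ u ∈ Dstar, HasFDerivAt F (F' u) u)
    (K : ℝ) (hK : 0 < K)
    (hLip : ∀ u₁ ∈ Dstar, ∀ u₂ ∈ Dstar, ‖F' u₁ - F' u₂‖ ≤ K * ‖u₁ - u₂‖)
    (ustar : X) (hustar : ustar ∈ Dstar)
    (Γ : X ≃L[ℝ] Y) (hΓ : (Γ : X →L[ℝ] Y) = F' ustar)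
    (β α rminus : ℝ)
    (hβ : β = ‖(Γ.symm : Y →L[ℝ] X)‖)
    (hα : α = ‖Γ.symm (F ustar)‖)
    (hsmall : β * K * α ≤ 1 / 2)
    (hrminus : rminus = (1 - Real.sqrt (1 - 2 * β * K * α)) / (β * K))
    (hball : closedBall ustar rminus ⊆ Dstar) :
    ∃ u : ℕ → X, u 0 = ustar ∧
      (∀ k, ∃ e : X ≃L[ℝ] Y, (e : X →L[ℝ] Y) = F' (u k) ∧
        u (k + 1) = u k - e.symm (F (u k))) ∧
      (∀ k, u k ∈ closedBall ustar rminus) :=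
  newton_kantorovich_sequence_exists_general F F' Dstar hdiff K hK hLip ustar Γ hΓ β α rminus hβ hα
    hsmall hrminus hball
end

section
/- Under the Kantorovich hypotheses with the strict inequality βKα < 1/2, any Newton sequence (u^(k)) for F starting at u* whose iterates all lie in the closed ball of radius r⁻ around u* converges to its limit u (a zero of F) at least quadratically: there exists a constant C > 0 such that ‖u^(k+1) − u‖_X ≤ C ‖u^(k) − u‖_X² for all k. -/
/-!
Kantorovich's majorant argument. With `c = β K`, Newton's method for the scalar quadratic
`poly c α t = c / 2 * t ^ 2 - t + α`, started at `0`, produces an increasing sequence `t k` that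
stays below its smaller root `r⁻`. By induction on `k`, `‖u k - u*‖ ≤ t k` and
`‖Γ* F (u k)‖ ≤ poly c α (t k)`: the perturbation bound
`(1 - β K ‖v - u*‖) ‖(F' v)⁻¹ y‖ ≤ ‖Γ* y‖` and the Taylor estimate
`‖F b - F a - F' a (b - a)‖ ≤ K / 2 * ‖b - a‖ ^ 2` make each Newton step of `u` no longer than
the corresponding step of `t`, so `(u k)` is Cauchy. Its limit `u` is a zero of `F` since
`F (u k) = -F' (u k) (u (k + 1) - u k)`. Finally `u (k + 1) - u` is `(F' (u k))⁻¹` applied to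
the Taylor remainder of `F` at `u k` evaluated at `u`, and on the ball of radius `r⁻` these
inverses are bounded by `β / (1 - β K r⁻)`, which gives quadratic convergence.
-/

open Metric Filter Topology

namespace Kantorovich

noncomputable def poly (c a t : ℝ) : ℝ := c / 2 * t ^ 2 - t + a

/-- Newton's method for `poly c a` started at `0`, as `deriv (poly c a) t = -(1 - c * t)`. -/
noncomputable def majorant (c a : ℝ) : ℕ → ℝ
  | 0 => 0
  | k + 1 => majorant c a k + poly c a (majorant c a k) / (1 - c * majorant c a k)

noncomputable def smallRoot (c a : ℝ) : ℝ := (1 - √(1 - 2 * c * a)) / c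

variable {c a r : ℝ}

/-- For `c = 0` the formula gives `0` (division by zero), a root of `poly 0 a` only if `a = 0`. -/
lemma smallRoot_spec (hc : 0 ≤ c) (ha : 0 ≤ a) (hca : c * a < 1 / 2) (hc0 : c = 0 → a = 0) :
    0 ≤ smallRoot c a ∧ c * smallRoot c a < 1 ∧ poly c a (smallRoot c a) = 0 := by
  have hpos : 0 < 1 - 2 * c * a := by linarith
  have hsq : √(1 - 2 * c * a) ^ 2 = 1 - 2 * c * a := Real.sq_sqrt hpos.le
  have hs0 : 0 < √(1 - 2 * c * a) := Real.sqrt_pos.2 hpos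
  have hs1 : √(1 - 2 * c * a) ≤ 1 := Real.sqrt_le_one.2 (by nlinarith)
  rcases hc.eq_or_lt with rfl | hc
  · simp [smallRoot, poly, hc0 rfl]
  have hcr : c * smallRoot c a = 1 - √(1 - 2 * c * a) := by unfold smallRoot; field_simp
  refine ⟨div_nonneg (by linarith) hc.le, by linarith, ?_⟩
  have : c * poly c a (smallRoot c a) = 0 := by
    unfold poly
    linear_combination
      (c * smallRoot c a / 2 - 1 / 2 * √(1 - 2 * c * a) - 1 / 2) * hcr + 1 / 2 * hsq
  exact (mul_eq_zero.1 this).resolve_left hc.ne'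

lemma majorant_succ_sub (k : ℕ) :
    majorant c a (k + 1) - majorant c a k =
      poly c a (majorant c a k) / (1 - c * majorant c a k) :=
  add_sub_cancel_left _ _

/-- Newton's method kills the constant and linear terms of a quadratic. -/
lemma poly_majorant_succ (k : ℕ) (hk : c * majorant c a k < 1) :
    poly c a (majorant c a (k + 1)) = c / 2 * (majorant c a (k + 1) - majorant c a k) ^ 2 := by
  have hd := majorant_succ_sub (c := c) (a := a) k
  set t := majorant c a k
  rw [eq_div_iff (by linarith)] at hd
  rw [show majorant c a (k + 1) = t + (majorant c a (k + 1) - t) by ring]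
  unfold poly at hd ⊢
  linear_combination -hd

lemma majorant_le_and_poly_nonneg (hc : 0 ≤ c) (ha : 0 ≤ a) (hr : 0 ≤ r) (hcr : c * r < 1)
    (hroot : poly c a r = 0) (k : ℕ) : majorant c a k ≤ r ∧ 0 ≤ poly c a (majorant c a k) := by
  induction k with
  | zero => simpa [majorant, poly] using ⟨hr, ha⟩
  | succ k ih =>
    obtain ⟨hle, hnonneg⟩ := ih
    have hden : c * majorant c a k < 1 := (mul_le_mul_of_nonneg_left hle hc).trans_lt hcr
    refine ⟨?_, poly_majorant_succ k hden ▸ by positivity⟩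
    have hd := majorant_succ_sub (c := c) (a := a) k
    rw [eq_div_iff (by linarith)] at hd
    unfold poly at hd hroot
    nlinarith [mul_nonneg hc (sq_nonneg (r - majorant c a k))]

end Kantorovich

lemma cauchySeq_of_dist_le_sub_of_bddAbove {α : Type*} [PseudoMetricSpace α] {u : ℕ → α}
    {t : ℕ → ℝ} (h : ∀ n, dist (u n) (u (n + 1)) ≤ t (n + 1) - t n)
    (ht : BddAbove (Set.range t)) : CauchySeq u := by
  obtain ⟨B, hB⟩ := ht
  refine cauchySeq_of_dist_le_of_summable _ h (summable_of_sum_range_le (c := B - t 0)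
    (fun n => dist_nonneg.trans (h n)) fun n => ?_)
  rw [Finset.sum_range_sub]
  linarith [hB ⟨n, rfl⟩]

section Newton

variable {X Y : Type*} [NormedAddCommGroup X] [NormedSpace ℝ X]
  [NormedAddCommGroup Y] [NormedSpace ℝ Y]

lemma ContinuousLinearEquiv.one_sub_mul_norm_symm_apply_le (Γ e : X ≃L[ℝ] Y) {q : ℝ}
    (hq : ‖(e : X →L[ℝ] Y) - Γ‖ ≤ q) (y : Y) :
    (1 - ‖(Γ.symm : Y →L[ℝ] X)‖ * q) * ‖e.symm y‖ ≤ ‖Γ.symm y‖ := by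
  set x := e.symm y
  have hx : x = Γ.symm y - Γ.symm (((e : X →L[ℝ] Y) - Γ) x) := by
    simp [x, map_sub]
  have : ‖x‖ ≤ ‖Γ.symm y‖ + ‖(Γ.symm : Y →L[ℝ] X)‖ * q * ‖x‖ := by
    calc ‖x‖ = ‖Γ.symm y - Γ.symm (((e : X →L[ℝ] Y) - Γ) x)‖ := congrArg norm hx
      _ ≤ ‖Γ.symm y‖ + ‖Γ.symm (((e : X →L[ℝ] Y) - Γ) x)‖ := norm_sub_le _ _
      _ ≤ ‖Γ.symm y‖ + ‖(Γ.symm : Y →L[ℝ] X)‖ * (‖(e : X →L[ℝ] Y) - Γ‖ * ‖x‖) := by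
        gcongr
        exact ((Γ.symm : Y →L[ℝ] X).le_opNorm _).trans
          (by gcongr; exact ContinuousLinearMap.le_opNorm _ _)
      _ ≤ ‖Γ.symm y‖ + ‖(Γ.symm : Y →L[ℝ] X)‖ * q * ‖x‖ := by
        rw [← mul_assoc]; gcongr
  linarith

structure HasLipschitzFDerivOn (F : X → Y) (F' : X → X →L[ℝ] Y) (K : ℝ) (s : Set X) : Prop where
  hasFDerivAt : ∀ x ∈ s, HasFDerivAt F (F' x) x
  lipschitz : ∀ x ∈ s, ∀ y ∈ s, ‖F' x - F' y‖ ≤ K * ‖x - y‖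

namespace HasLipschitzFDerivOn

variable {F : X → Y} {F' : X → X →L[ℝ] Y} {K : ℝ} {s : Set X}

lemma continuousOn_fderiv (hF : HasLipschitzFDerivOn F F' K s) : ContinuousOn F' s :=
  (LipschitzOnWith.of_dist_le' fun x hx y hy => by
    simpa only [dist_eq_norm] using hF.lipschitz x hx y hy).continuousOn

/-- Along the segment `γ t = a + t • (b - a)`, the remainder has derivative of norm at most
`K ‖b - a‖² t`, whose primitive vanishing at `0` is `K ‖b - a‖² t² / 2`. -/
lemma norm_sub_sub_apply_le (hF : HasLipschitzFDerivOn F F' K s) (hs : Convex ℝ s) {a b : X}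
    (ha : a ∈ s) (hb : b ∈ s) : ‖F b - F a - F' a (b - a)‖ ≤ K / 2 * ‖b - a‖ ^ 2 := by
  set γ : ℝ → X := fun t => a + t • (b - a)
  have hγs : ∀ t ∈ Set.Icc (0 : ℝ) 1, γ t ∈ s := fun t ht => hs.add_smul_sub_mem ha hb ht
  set g : ℝ → Y := fun t => F (γ t) - F a - t • F' a (b - a)
  have hg : ∀ t ∈ Set.Icc (0 : ℝ) 1, HasDerivAt g (F' (γ t) (b - a) - F' a (b - a)) t := by
    intro t ht
    have hγ : HasDerivAt γ (b - a) t := by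
      convert ((hasDerivAt_id t).smul_const (b - a)).const_add a using 1 <;> simp [γ]
    exact (((hF.hasFDerivAt _ (hγs t ht)).comp_hasDerivAt t hγ).sub_const (F a)).sub
      (by simpa using (hasDerivAt_id t).smul_const (F' a (b - a)))
  have hB : ∀ t, HasDerivAt (fun t => K * ‖b - a‖ ^ 2 / 2 * t ^ 2) (K * ‖b - a‖ ^ 2 * t) t :=
    fun t => ((hasDerivAt_pow 2 t).const_mul (K * ‖b - a‖ ^ 2 / 2)).congr_deriv (by ring)
  have hbound : ∀ t ∈ Set.Ico (0 : ℝ) 1,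
      ‖F' (γ t) (b - a) - F' a (b - a)‖ ≤ K * ‖b - a‖ ^ 2 * t := by
    intro t ht
    have hγa : ‖γ t - a‖ = t * ‖b - a‖ := by simp [γ, norm_smul, abs_of_nonneg ht.1]
    calc ‖F' (γ t) (b - a) - F' a (b - a)‖ = ‖(F' (γ t) - F' a) (b - a)‖ := rfl
      _ ≤ ‖F' (γ t) - F' a‖ * ‖b - a‖ := (F' (γ t) - F' a).le_opNorm _
      _ ≤ K * (t * ‖b - a‖) * ‖b - a‖ := by
        gcongr
        exact hγa ▸ hF.lipschitz _ (hγs t (Set.Ico_subset_Icc_self ht)) a ha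
      _ = K * ‖b - a‖ ^ 2 * t := by ring
  calc ‖F b - F a - F' a (b - a)‖ = ‖g 1‖ := by simp [g, γ]
    _ ≤ K * ‖b - a‖ ^ 2 / 2 * 1 ^ 2 := image_norm_le_of_norm_deriv_right_le_deriv_boundary
        (fun t ht => (hg t ht).continuousAt.continuousWithinAt)
        (fun t ht => (hg t (Set.Ico_subset_Icc_self ht)).hasDerivWithinAt)
        (by simp [g, γ]) hB hbound (Set.right_mem_Icc.2 zero_le_one)
    _ = K / 2 * ‖b - a‖ ^ 2 := by ring

end HasLipschitzFDerivOn

def IsNewtonSeq (F : X → Y) (F' : X → X →L[ℝ] Y) (u : ℕ → X) : Prop :=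
  ∀ k, ∃ e : X ≃L[ℝ] Y, (e : X →L[ℝ] Y) = F' (u k) ∧ u (k + 1) = u k - e.symm (F (u k))

namespace IsNewtonSeq

open Kantorovich

variable {F : X → Y} {F' : X → X →L[ℝ] Y} {u : ℕ → X} {s : Set X} {K : ℝ}

lemma fderiv_apply_succ_sub (hu : IsNewtonSeq F F' u) (k : ℕ) :
    F' (u k) (u (k + 1) - u k) = -F (u k) := by
  obtain ⟨e, he, hk⟩ := hu k
  rw [hk, ← he]
  simp

lemma map_eq_zero_of_tendsto (hu : IsNewtonSeq F F' u) {x : X} (hlim : Tendsto u atTop (𝓝 x))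
    (hF : ContinuousAt F x) (hF' : Tendsto (fun k => F' (u k)) atTop (𝓝 (F' x))) : F x = 0 := by
  have hstep : Tendsto (fun k => u (k + 1) - u k) atTop (𝓝 0) := by
    simpa using (hlim.comp (tendsto_add_atTop_nat 1)).sub hlim
  have hlin : Tendsto (fun k => F' (u k) (u (k + 1) - u k)) atTop (𝓝 (F' x 0)) :=
    (isBoundedBilinearMap_apply.continuous.tendsto (F' x, 0)).comp (hF'.prodMk_nhds hstep)
  refine tendsto_nhds_unique (f := fun k => F (u k)) (hF.tendsto.comp hlim) ?_
  simpa [fderiv_apply_succ_sub hu] using hlin.neg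

lemma norm_map_succ_le (hu : IsNewtonSeq F F' u) (hF : HasLipschitzFDerivOn F F' K s)
    (hs : Convex ℝ s) {k : ℕ} (hk : u k ∈ s) (hk' : u (k + 1) ∈ s) :
    ‖F (u (k + 1))‖ ≤ K / 2 * ‖u (k + 1) - u k‖ ^ 2 := by
  simpa [fderiv_apply_succ_sub hu] using hF.norm_sub_sub_apply_le hs hk hk'

variable (Γ : X ≃L[ℝ] Y)

lemma one_sub_mul_norm_succ_sub_le (hu : IsNewtonSeq F F' u)
    (hF : HasLipschitzFDerivOn F F' K s) (hΓ : (Γ : X →L[ℝ] Y) = F' (u 0)) (h0 : u 0 ∈ s)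
    {k : ℕ} (hk : u k ∈ s) :
    (1 - ‖(Γ.symm : Y →L[ℝ] X)‖ * K * ‖u k - u 0‖) * ‖u (k + 1) - u k‖ ≤
      ‖Γ.symm (F (u k))‖ := by
  obtain ⟨e, he, hstep⟩ := hu k
  rw [hstep, sub_sub_cancel_left, norm_neg, mul_assoc]
  exact Γ.one_sub_mul_norm_symm_apply_le e (he ▸ hΓ ▸ hF.lipschitz _ hk _ h0) _

/-- The Newton error `u (k + 1) - x` is `(F' (u k))⁻¹` applied to the Taylor remainder of `F`
at `u k` evaluated at the zero `x`. -/
lemma one_sub_mul_norm_succ_sub_zero_le (hu : IsNewtonSeq F F' u)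
    (hF : HasLipschitzFDerivOn F F' K s) (hs : Convex ℝ s) (hΓ : (Γ : X →L[ℝ] Y) = F' (u 0))
    (h0 : u 0 ∈ s) {k : ℕ} (hk : u k ∈ s) {x : X} (hx : x ∈ s) (hFx : F x = 0) :
    (1 - ‖(Γ.symm : Y →L[ℝ] X)‖ * K * ‖u k - u 0‖) * ‖u (k + 1) - x‖ ≤
      ‖(Γ.symm : Y →L[ℝ] X)‖ * (K / 2 * ‖u k - x‖ ^ 2) := by
  obtain ⟨e, he, hstep⟩ := hu k
  set z := F x - F (u k) - F' (u k) (x - u k)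
  have hz : u (k + 1) - x = e.symm z := by
    have : e.symm (F' (u k) (x - u k)) = x - u k := by rw [← he]; exact e.symm_apply_apply _
    rw [map_sub, map_sub, this, hFx, hstep, map_zero]
    abel
  rw [hz, mul_assoc, norm_sub_rev (u k) x]
  calc _ ≤ ‖Γ.symm z‖ :=
        Γ.one_sub_mul_norm_symm_apply_le e (he ▸ hΓ ▸ hF.lipschitz _ hk _ h0) _
    _ ≤ ‖(Γ.symm : Y →L[ℝ] X)‖ * ‖z‖ := (Γ.symm : Y →L[ℝ] X).le_opNorm z
    _ ≤ _ := by gcongr; exact hF.norm_sub_sub_apply_le hs hk hx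

variable {β α r : ℝ}

lemma norm_succ_sub_le_mul_sq (hu : IsNewtonSeq F F' u)
    (hF : HasLipschitzFDerivOn F F' K (closedBall (u 0) r)) (hK : 0 ≤ K)
    (hus : ∀ k, u k ∈ closedBall (u 0) r) (hΓ : (Γ : X →L[ℝ] Y) = F' (u 0))
    (hβ : β = ‖(Γ.symm : Y →L[ℝ] X)‖) (hr : β * K * r < 1) {x : X} (hx : x ∈ closedBall (u 0) r)
    (hFx : F x = 0) (k : ℕ) :
    ‖u (k + 1) - x‖ ≤ β * K / (2 * (1 - β * K * r)) * ‖u k - x‖ ^ 2 := by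
  have hc : 0 ≤ β * K := mul_nonneg (hβ ▸ norm_nonneg _) hK
  have hk : (1 - β * K * r) * ‖u (k + 1) - x‖ ≤ β * K / 2 * ‖u k - x‖ ^ 2 :=
    calc _ ≤ (1 - β * K * ‖u k - u 0‖) * ‖u (k + 1) - x‖ := by
          gcongr
          simpa [dist_eq_norm] using hus k
      _ ≤ β * (K / 2 * ‖u k - x‖ ^ 2) := hβ ▸
          hu.one_sub_mul_norm_succ_sub_zero_le Γ hF (convex_closedBall _ _) hΓ (hus 0) (hus k)
            hx hFx
      _ = _ := by ring
  rw [div_mul_eq_mul_div, le_div_iff₀ (by linarith)]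
  linarith

lemma norm_succ_sub_le_majorant (hu : IsNewtonSeq F F' u) (hF : HasLipschitzFDerivOn F F' K s)
    (hK : 0 ≤ K) (hΓ : (Γ : X →L[ℝ] Y) = F' (u 0)) (hβ : β = ‖(Γ.symm : Y →L[ℝ] X)‖)
    (h0 : u 0 ∈ s) {k : ℕ} (hk : u k ∈ s) (hden : β * K * majorant (β * K) α k < 1)
    (hdist : ‖u k - u 0‖ ≤ majorant (β * K) α k)
    (hval : ‖Γ.symm (F (u k))‖ ≤ poly (β * K) α (majorant (β * K) α k)) :
    ‖u (k + 1) - u k‖ ≤ majorant (β * K) α (k + 1) - majorant (β * K) α k := by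
  have hc : 0 ≤ β * K := mul_nonneg (hβ ▸ norm_nonneg _) hK
  rw [majorant_succ_sub, le_div_iff₀ (by linarith), mul_comm]
  calc _ ≤ (1 - β * K * ‖u k - u 0‖) * ‖u (k + 1) - u k‖ := by gcongr
    _ ≤ _ := hβ ▸ one_sub_mul_norm_succ_sub_le Γ hu hF hΓ h0 hk
    _ ≤ _ := hval

lemma norm_sub_le_majorant_and_norm_symm_map_le (hu : IsNewtonSeq F F' u)
    (hF : HasLipschitzFDerivOn F F' K s) (hs : Convex ℝ s) (hus : ∀ k, u k ∈ s) (hK : 0 ≤ K)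
    (hΓ : (Γ : X →L[ℝ] Y) = F' (u 0)) (hβ : β = ‖(Γ.symm : Y →L[ℝ] X)‖)
    (hα : α = ‖Γ.symm (F (u 0))‖) (hden : ∀ k, β * K * majorant (β * K) α k < 1) (k : ℕ) :
    ‖u k - u 0‖ ≤ majorant (β * K) α k ∧
      ‖Γ.symm (F (u k))‖ ≤ poly (β * K) α (majorant (β * K) α k) := by
  induction k with
  | zero => simp [majorant, poly, hα]
  | succ k ih =>
    have hstep := norm_succ_sub_le_majorant Γ hu hF hK hΓ hβ (hus 0) (hus k) (hden k) ih.1 ih.2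
    have hβ0 : 0 ≤ β := hβ ▸ norm_nonneg _
    refine ⟨?_, ?_⟩
    · calc ‖u (k + 1) - u 0‖ ≤ ‖u (k + 1) - u k‖ + ‖u k - u 0‖ :=
            norm_sub_le_norm_sub_add_norm_sub _ _ _
        _ ≤ _ := by linarith [ih.1]
    · rw [poly_majorant_succ k (hden k)]
      calc ‖Γ.symm (F (u (k + 1)))‖ ≤ β * ‖F (u (k + 1))‖ :=
            hβ ▸ (Γ.symm : Y →L[ℝ] X).le_opNorm _
        _ ≤ β * (K / 2 * (majorant (β * K) α (k + 1) - majorant (β * K) α k) ^ 2) := by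
          gcongr
          exact (norm_map_succ_le hu hF hs (hus k) (hus (k + 1))).trans (by gcongr)
        _ = _ := by ring

lemma cauchySeq_of_poly_root (hu : IsNewtonSeq F F' u) (hF : HasLipschitzFDerivOn F F' K s)
    (hs : Convex ℝ s) (hus : ∀ k, u k ∈ s) (hK : 0 ≤ K) (hΓ : (Γ : X →L[ℝ] Y) = F' (u 0))
    (hβ : β = ‖(Γ.symm : Y →L[ℝ] X)‖) (hα : α = ‖Γ.symm (F (u 0))‖) (hr : 0 ≤ r)
    (hcr : β * K * r < 1) (hroot : poly (β * K) α r = 0) : CauchySeq u := by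
  have hc : 0 ≤ β * K := mul_nonneg (hβ ▸ norm_nonneg _) hK
  have hmaj := majorant_le_and_poly_nonneg hc (hα ▸ norm_nonneg _) hr hcr hroot
  have hden : ∀ k, β * K * majorant (β * K) α k < 1 :=
    fun k => (mul_le_mul_of_nonneg_left (hmaj k).1 hc).trans_lt hcr
  refine cauchySeq_of_dist_le_sub_of_bddAbove (fun k => ?_)
    ⟨r, by rintro _ ⟨k, rfl⟩; exact (hmaj k).1⟩
  have h := norm_sub_le_majorant_and_norm_symm_map_le Γ hu hF hs hus hK hΓ hβ hα hden k
  rw [dist_comm, dist_eq_norm]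
  exact norm_succ_sub_le_majorant Γ hu hF hK hΓ hβ (hus 0) (hus k) (hden k) h.1 h.2

end IsNewtonSeq

end Newton

theorem newton_kantorovich_quadratic_convergence_general
    {X Y : Type*} [NormedAddCommGroup X] [NormedSpace ℝ X] [CompleteSpace X]
    [NormedAddCommGroup Y] [NormedSpace ℝ Y]
    (F : X → Y) (F' : X → X →L[ℝ] Y)
    (Dstar : Set X)
    (hdiff : ∀ u ∈ Dstar, HasFDerivAt F (F' u) u)
    (K : ℝ) (hK : 0 < K)
    (hLip : ∀ u₁ ∈ Dstar, ∀ u₂ ∈ Dstar, ‖F' u₁ - F' u₂‖ ≤ K * ‖u₁ - u₂‖)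
    (ustar : X)
    (Γ : X ≃L[ℝ] Y) (hΓ : (Γ : X →L[ℝ] Y) = F' ustar)
    (β α rminus : ℝ)
    (hβ : β = ‖(Γ.symm : Y →L[ℝ] X)‖)
    (hα : α = ‖Γ.symm (F ustar)‖)
    (hsmall : β * K * α < 1 / 2)
    (hrminus : rminus = (1 - Real.sqrt (1 - 2 * β * K * α)) / (β * K))
    (hball : closedBall ustar rminus ⊆ Dstar)
    (useq : ℕ → X) (h0 : useq 0 = ustar)
    (hnewton : ∀ k, ∃ e : X ≃L[ℝ] Y, (e : X →L[ℝ] Y) = F' (useq k) ∧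
      useq (k + 1) = useq k - e.symm (F (useq k)))
    (hin : ∀ k, useq k ∈ closedBall ustar rminus) :
    ∃ u : X, Tendsto useq atTop (nhds u) ∧ F u = 0 ∧
      ∃ C : ℝ, 0 < C ∧ ∀ k, ‖useq (k + 1) - u‖ ≤ C * ‖useq k - u‖ ^ 2 := by
  subst h0
  replace hnewton : IsNewtonSeq F F' useq := hnewton
  have hF : HasLipschitzFDerivOn F F' K (closedBall (useq 0) rminus) :=
    ⟨fun x hx => hdiff x (hball hx), fun x hx y hy => hLip x (hball hx) y (hball hy)⟩
  have hc : 0 ≤ β * K := mul_nonneg (hβ ▸ norm_nonneg _) hK.le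
  have hc0 : β * K = 0 → α = 0 := fun h => by
    have : (Γ.symm : Y →L[ℝ] X) = 0 :=
      norm_eq_zero.1 (hβ ▸ (mul_eq_zero.1 h).resolve_right hK.ne')
    simp [hα, ← ContinuousLinearEquiv.coe_coe, this]
  have hr : Kantorovich.smallRoot (β * K) α = rminus := by
    rw [hrminus, Kantorovich.smallRoot]; ring_nf
  obtain ⟨hr0, hcr, hroot⟩ :=
    hr ▸ Kantorovich.smallRoot_spec hc (hα ▸ norm_nonneg _) (by linarith) hc0
  obtain ⟨u, hu⟩ := cauchySeq_tendsto_of_complete <| hnewton.cauchySeq_of_poly_root Γ hF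
    (convex_closedBall _ _) hin hK.le hΓ hβ hα hr0 hcr hroot
  have huB : u ∈ closedBall (useq 0) rminus :=
    isClosed_closedBall.mem_of_tendsto hu (Eventually.of_forall hin)
  have hFu : F u = 0 := hnewton.map_eq_zero_of_tendsto hu (hF.hasFDerivAt u huB).continuousAt
    ((hF.continuousOn_fderiv u huB).tendsto.comp
      (tendsto_nhdsWithin_iff.2 ⟨hu, Eventually.of_forall hin⟩))
  have hC : 0 ≤ β * K / (2 * (1 - β * K * rminus)) := div_nonneg hc (by linarith)
  refine ⟨u, hu, hFu, β * K / (2 * (1 - β * K * rminus)) + 1, by positivity, fun k => ?_⟩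
  exact (hnewton.norm_succ_sub_le_mul_sq Γ hF hK.le hin hΓ hβ hcr huB hFu k).trans
    (by gcongr; linarith)

/-- Newton–Kantorovich with strict inequality: quadratic convergence of the Newton iterates
to the zero of `F`. -/
theorem newton_kantorovich_quadratic_convergence
    {X Y : Type*} [NormedAddCommGroup X] [NormedSpace ℝ X] [CompleteSpace X]
    [NormedAddCommGroup Y] [NormedSpace ℝ Y] [CompleteSpace Y]
    (F : X → Y) (F' : X → X →L[ℝ] Y)
    (Dstar : Set X) (hDopen : IsOpen Dstar) (hDconv : Convex ℝ Dstar)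
    (hdiff : ∀ u ∈ Dstar, HasFDerivAt F (F' u) u)
    (K : ℝ) (hK : 0 < K)
    (hLip : ∀ u₁ ∈ Dstar, ∀ u₂ ∈ Dstar, ‖F' u₁ - F' u₂‖ ≤ K * ‖u₁ - u₂‖)
    (ustar : X) (hustar : ustar ∈ Dstar)
    (Γ : X ≃L[ℝ] Y) (hΓ : (Γ : X →L[ℝ] Y) = F' ustar)
    (β α rminus : ℝ)
    (hβ : β = ‖(Γ.symm : Y →L[ℝ] X)‖)
    (hα : α = ‖Γ.symm (F ustar)‖)
    (hsmall : β * K * α < 1 / 2)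
    (hrminus : rminus = (1 - Real.sqrt (1 - 2 * β * K * α)) / (β * K))
    (hball : closedBall ustar rminus ⊆ Dstar)
    (useq : ℕ → X) (h0 : useq 0 = ustar)
    (hnewton : ∀ k, ∃ e : X ≃L[ℝ] Y, (e : X →L[ℝ] Y) = F' (useq k) ∧
      useq (k + 1) = useq k - e.symm (F (useq k)))
    (hin : ∀ k, useq k ∈ closedBall ustar rminus) :
    ∃ u : X, Tendsto useq atTop (nhds u) ∧ F u = 0 ∧
      ∃ C : ℝ, 0 < C ∧ ∀ k, ‖useq (k + 1) - u‖ ≤ C * ‖useq k - u‖ ^ 2 :=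
  newton_kantorovich_quadratic_convergence_general F F' Dstar hdiff K hK hLip ustar Γ hΓ β α rminus
    hβ hα hsmall hrminus hball useq h0 hnewton hin
end
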